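/- For all ξ, η ∈ ℋ with ξ ≠ (0,0) and η ≠ (0,0), the inversion satisfies the distance distortion identity ‖R(ξ)⁻¹ · R(η)‖ · ‖ξ‖ · ‖η‖ = ‖ξ⁻¹ · η‖, where ξ⁻¹ denotes the group inverse in ℋ. -/

import Mathlib

open scoped BigOperators
open Matrix

noncomputable section

namespace OC

/-- Octonions, identified with ℝ⁸. -/
abbrev Octo : Type := Fin 8 → ℝ

/-- The seven positively-oriented triples Ω. -/
def OmegaT : List (Fin 8 × Fin 8 × Fin 8) :=
  [(1,2,3),(2,4,6),(4,3,5),(3,6,7),(6,5,1),(5,7,2),(7,1,4)]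

/-- The six permutations of a triple, with their signs. -/
def signedPerms3 (t : Fin 8 × Fin 8 × Fin 8) : List (ℝ × (Fin 8 × Fin 8 × Fin 8)) :=
  [(1,(t.1,t.2.1,t.2.2)), (1,(t.2.1,t.2.2,t.1)), (1,(t.2.2,t.1,t.2.1)),
   (-1,(t.2.1,t.1,t.2.2)), (-1,(t.1,t.2.2,t.2.1)), (-1,(t.2.2,t.2.1,t.1))]

/-- The totally antisymmetric symbol ε with ε(α,β,γ) = 1 on Ω and vanishing on triples
that are not permutations of a triple of Ω. -/
def eps (a b c : Fin 8) : ℝ :=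
  (((OmegaT.map signedPerms3).flatten).map (fun p => if p.2 = (a,b,c) then p.1 else 0)).sum

/-- Coefficient of `e d` in the product `e a * e b`: `e 0` is a two-sided unit and
`e α * e β = -δ_{αβ} e 0 + ∑ γ, ε(α,β,γ) e γ` for imaginary indices. -/
def mulCoef (a b d : Fin 8) : ℝ :=
  if a = 0 then (if d = b then 1 else 0)
  else if b = 0 then (if d = a then 1 else 0)
  else (if a = b ∧ d = 0 then -1 else 0) + eps a b d

/-- Octonion multiplication on ℝ⁸. -/
def omul (x y : Octo) : Octo := fun d => ∑ a, ∑ b, x a * y b * mulCoef a b d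

/-- The standard basis octonions e₀,…,e₇. -/
def e (a : Fin 8) : Octo := fun d => if d = a then 1 else 0

/-- Real part. -/
def reO (x : Octo) : ℝ := x 0

/-- Imaginary part. -/
def imO (x : Octo) : Octo := fun d => if d = 0 then 0 else x d

/-- Octonion conjugation. -/
def conjO (x : Octo) : Octo := fun d => if d = 0 then x 0 else -x d

/-- Squared Euclidean norm |x|². -/
def normSq (x : Octo) : ℝ := ∑ a, (x a)^2

/-- Inverse of a nonzero octonion, q⁻¹ = q̄ / |q|². -/
def oinv (q : Octo) : Octo := (normSq q)⁻¹ • conjO q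

/-- The seven quadruples Λ. -/
def LambdaT : List (Fin 8 × Fin 8 × Fin 8 × Fin 8) :=
  [(5,4,6,7),(7,3,5,1),(1,6,7,2),(2,5,1,4),(4,7,2,3),(3,1,4,6),(6,2,5,3)]

/-- The 24 permutations of a quadruple, with their signs. -/
def signedPerms4 (t : Fin 8 × Fin 8 × Fin 8 × Fin 8) :
    List (ℝ × (Fin 8 × Fin 8 × Fin 8 × Fin 8)) :=
  let a := t.1; let b := t.2.1; let c := t.2.2.1; let d := t.2.2.2
  [ (1,(a,b,c,d)), (-1,(a,b,d,c)), (-1,(a,c,b,d)), (1,(a,c,d,b)), (1,(a,d,b,c)), (-1,(a,d,c,b)),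
    (-1,(b,a,c,d)), (1,(b,a,d,c)), (1,(b,c,a,d)), (-1,(b,c,d,a)), (-1,(b,d,a,c)), (1,(b,d,c,a)),
    (1,(c,a,b,d)), (-1,(c,a,d,b)), (-1,(c,b,a,d)), (1,(c,b,d,a)), (1,(c,d,a,b)), (-1,(c,d,b,a)),
    (-1,(d,a,b,c)), (1,(d,a,c,b)), (1,(d,b,a,c)), (-1,(d,b,c,a)), (-1,(d,c,a,b)), (1,(d,c,b,a)) ]

/-- The totally antisymmetric symbol ε₄ with value 1 on Λ and vanishing on quadruples
that are not permutations of a quadruple of Λ. -/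
def eps4 (a b c d : Fin 8) : ℝ :=
  (((LambdaT.map signedPerms4).flatten).map (fun p => if p.2 = (a,b,c,d) then p.1 else 0)).sum

/-- Matrix of left multiplication by `e a`: `(Imat a) d c` is the coefficient of `e d` in
`e a * e c`. -/
def Imat (a : Fin 8) : Matrix (Fin 8) (Fin 8) ℝ := Matrix.of fun d c => mulCoef a c d

/-- Octonionic Heisenberg group multiplication on 𝕆 × Im 𝕆 (realized inside 𝕆 × 𝕆):
`(x,t)·(y,s) = (x+y, t+s+2 Im(x ȳ))`. -/
def hmul (p q : Octo × Octo) : Octo × Octo :=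
  (p.1 + q.1, p.2 + q.2 + (2:ℝ) • imO (omul p.1 (conjO q.1)))

/-- Group inverse in the octonionic Heisenberg group. -/
def hinv (p : Octo × Octo) : Octo × Octo := (-p.1, -p.2)

/-- Homogeneous norm ‖(x,t)‖ = (|x|⁴+|t|²)^{1/4}. -/
def hnorm (p : Octo × Octo) : ℝ := ((normSq p.1)^2 + normSq p.2) ^ ((1:ℝ)/4)

/-- The inversion R(x,t) = (−((|x|²e₀ − t)⁻¹)x, −t/(|x|⁴+|t|²)). -/
def Rmap (p : Octo × Octo) : Octo × Octo :=
  (-(omul (oinv (normSq p.1 • e 0 - p.2)) p.1),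
   -(((normSq p.1)^2 + normSq p.2)⁻¹ • p.2))

/-- E^β = I_β for β ∈ {1,…,7}, indexed here by `Fin 7` via `β ↦ β+1`. -/
def E7 (β : Fin 7) : Matrix (Fin 8) (Fin 8) ℝ := Imat β.succ

/-- Octonionic Heisenberg group multiplication in ℝ⁸ × ℝ⁷ coordinates. -/
def hmulC (p q : (Fin 8 → ℝ) × (Fin 7 → ℝ)) : (Fin 8 → ℝ) × (Fin 7 → ℝ) :=
  (p.1 + q.1, fun β => p.2 β + q.2 β + 2 * ∑ a, ∑ b, E7 β a b * p.1 a * q.1 b)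

/-- The left-invariant horizontal vector fields
`X_a = ∂/∂x_a + 2 ∑_{β,b} (E^β)_{ba} x_b ∂/∂t_β`. -/
def Xop (a : Fin 8) (f : ((Fin 8 → ℝ) × (Fin 7 → ℝ)) → ℝ)
    (p : (Fin 8 → ℝ) × (Fin 7 → ℝ)) : ℝ :=
  fderiv ℝ f p ((Pi.single a 1 : Fin 8 → ℝ), (0 : Fin 7 → ℝ))
    + 2 * ∑ β : Fin 7, ∑ b : Fin 8,
        E7 β b a * p.1 b * fderiv ℝ f p ((0 : Fin 8 → ℝ), (Pi.single β 1 : Fin 7 → ℝ))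

/-- ρ(x,t) = |x|⁴ + |t|². -/
def rho (p : (Fin 8 → ℝ) × (Fin 7 → ℝ)) : ℝ :=
  (∑ a, (p.1 a)^2)^2 + ∑ β, (p.2 β)^2

/-!
Write `ν(x,t) = |x|² e₀ − t`. For imaginary `t` one has `|ν|² = |x|⁴ + |t|²`, and a direct
computation gives `‖ξ⁻¹·η‖⁴ = |ν̄(ξ) + ν(η) − 2 y x̄|²` for `ξ = (x,t)`, `η = (y,s)`. The inversion
acts by `ν(Rξ) = ν̄(ξ)/|ν(ξ)|²` and `x ↦ −ν̄(ξ) x/|ν(ξ)|²`, so after clearing denominators the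
theorem becomes the octonionic identity
`| |b|² a + |a|² b̄ − 2 (b̄ y)(x̄ a) |² = |a|² |b|² |ā + b − 2 y x̄|²` with `a = ν(ξ)`, `b = ν(η)`.
Expanding both sides with inner products, it follows from `|uv| = |u| |v|`, the alternative law
`a (ā z) = |a|² z` and the adjunctions `⟨a, bc⟩ = ⟨a c̄, b⟩ = ⟨b̄ a, c⟩`; no associativity is needed.
-/

set_option maxHeartbeats 4000000 in
lemma omul_eq (x y : Octo) : omul x y =
    ![x 0 * y 0 - x 1 * y 1 - x 2 * y 2 - x 3 * y 3 - x 4 * y 4 - x 5 * y 5 - x 6 * y 6 - x 7 * y 7,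
      x 0 * y 1 + x 1 * y 0 + x 2 * y 3 - x 3 * y 2 + x 4 * y 7 - x 5 * y 6 + x 6 * y 5 - x 7 * y 4,
      x 0 * y 2 - x 1 * y 3 + x 2 * y 0 + x 3 * y 1 + x 4 * y 6 + x 5 * y 7 - x 6 * y 4 - x 7 * y 5,
      x 0 * y 3 + x 1 * y 2 - x 2 * y 1 + x 3 * y 0 - x 4 * y 5 + x 5 * y 4 + x 6 * y 7 - x 7 * y 6,
      x 0 * y 4 - x 1 * y 7 - x 2 * y 6 + x 3 * y 5 + x 4 * y 0 - x 5 * y 3 + x 6 * y 2 + x 7 * y 1,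
      x 0 * y 5 + x 1 * y 6 - x 2 * y 7 - x 3 * y 4 + x 4 * y 3 + x 5 * y 0 - x 6 * y 1 + x 7 * y 2,
      x 0 * y 6 - x 1 * y 5 + x 2 * y 4 - x 3 * y 7 - x 4 * y 2 + x 5 * y 1 + x 6 * y 0 + x 7 * y 3,
      x 0 * y 7 + x 1 * y 4 + x 2 * y 5 + x 3 * y 6 - x 4 * y 1 - x 5 * y 2 - x 6 * y 3 + x 7 * y 0] := by
  funext d
  fin_cases d <;>
  simp +decide only [omul, Fin.sum_univ_eight, mulCoef, eps, OmegaT, signedPerms3, List.map,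
    List.flatten, List.sum_cons, List.sum_nil, List.append_nil, List.append_eq, List.cons_append,
    List.nil_append, if_true, if_false] <;>
  simp <;> ring

section Coordinates

attribute [local simp] omul_eq conjO normSq dotProduct Fin.sum_univ_eight

lemma conjO_conjO (x : Octo) : conjO (conjO x) = x := by
  funext d; fin_cases d <;> simp

lemma normSq_conjO (x : Octo) : normSq (conjO x) = normSq x := by
  simp

lemma conjO_dotProduct_conjO (x y : Octo) : conjO x ⬝ᵥ conjO y = x ⬝ᵥ y := by
  simp

lemma conjO_omul (x y : Octo) : conjO (omul x y) = omul (conjO y) (conjO x) := by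
  funext d; fin_cases d <;> simp <;> ring

lemma omul_smul_left (r : ℝ) (x y : Octo) : omul (r • x) y = r • omul x y := by
  funext d; fin_cases d <;> simp <;> ring

lemma omul_smul_right (r : ℝ) (x y : Octo) : omul x (r • y) = r • omul x y := by
  funext d; fin_cases d <;> simp <;> ring

lemma omul_neg_left (x y : Octo) : omul (-x) y = -omul x y := by
  funext d; fin_cases d <;> simp <;> ring

lemma omul_neg_right (x y : Octo) : omul x (-y) = -omul x y := by
  funext d; fin_cases d <;> simp <;> ring

lemma conjO_smul (r : ℝ) (x : Octo) : conjO (r • x) = r • conjO x := by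
  funext d; fin_cases d <;> simp

lemma conjO_neg (x : Octo) : conjO (-x) = -conjO x := by
  funext d; fin_cases d <;> simp

lemma normSq_smul (r : ℝ) (x : Octo) : normSq (r • x) = r ^ 2 * normSq x := by
  simp; ring

lemma normSq_neg (x : Octo) : normSq (-x) = normSq x := by
  simp

lemma dotProduct_self_eq_normSq (x : Octo) : x ⬝ᵥ x = normSq x := by
  simp; ring

lemma omul_omul_conjO_left (a z : Octo) : omul a (omul (conjO a) z) = normSq a • z := by
  funext d; fin_cases d <;> simp <;> ring

lemma omul_dotProduct_omul_left (a u v : Octo) :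
    omul a u ⬝ᵥ omul a v = normSq a * (u ⬝ᵥ v) := by
  simp; ring

lemma dotProduct_omul_eq_omul_conjO_dotProduct (a b c : Octo) :
    a ⬝ᵥ omul b c = omul a (conjO c) ⬝ᵥ b := by
  simp; ring

lemma dotProduct_omul_eq_conjO_omul_dotProduct (a b c : Octo) :
    a ⬝ᵥ omul b c = omul (conjO b) a ⬝ᵥ c := by
  simp; ring

lemma normSq_omul (x y : Octo) : normSq (omul x y) = normSq x * normSq y := by
  rw [← dotProduct_self_eq_normSq, omul_dotProduct_omul_left, dotProduct_self_eq_normSq]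

lemma normSq_add_sub_two_smul (u v w : Octo) :
    normSq (u + v - (2:ℝ) • w) = normSq u + normSq v + 4 * normSq w
      + 2 * (u ⬝ᵥ v) - 4 * (u ⬝ᵥ w) - 4 * (v ⬝ᵥ w) := by
  simp; ring

lemma normSq_nonneg (x : Octo) : 0 ≤ normSq x :=
  Finset.sum_nonneg fun _ _ => sq_nonneg _

lemma normSq_eq_zero_iff {x : Octo} : normSq x = 0 ↔ x = 0 := by
  rw [normSq, Fintype.sum_eq_zero_iff_of_nonneg fun _ => sq_nonneg _]
  simp [funext_iff]

end Coordinates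

lemma normSq_inversion_identity (a b x y : Octo) :
    normSq (normSq b • a + normSq a • conjO b - (2:ℝ) • omul (omul (conjO b) y) (omul (conjO x) a))
      = normSq a * normSq b * normSq (conjO a + b - (2:ℝ) • omul y (conjO x)) := by
  have h_a : a ⬝ᵥ omul (omul (conjO b) y) (omul (conjO x) a) = normSq a * (omul b x ⬝ᵥ y) := by
    rw [dotProduct_omul_eq_omul_conjO_dotProduct, conjO_omul, conjO_conjO, omul_omul_conjO_left,
      smul_dotProduct, dotProduct_omul_eq_conjO_omul_dotProduct x, conjO_conjO, smul_eq_mul]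
  have h_b : conjO b ⬝ᵥ omul (omul (conjO b) y) (omul (conjO x) a)
      = normSq b * (omul (conjO a) x ⬝ᵥ y) := by
    rw [dotProduct_omul_eq_omul_conjO_dotProduct, conjO_omul, conjO_conjO,
      omul_dotProduct_omul_left, normSq_conjO]
  have h_ab : a ⬝ᵥ conjO b = conjO a ⬝ᵥ b := by
    rw [← conjO_dotProduct_conjO, conjO_conjO]
  have h_ay : conjO a ⬝ᵥ omul y (conjO x) = omul (conjO a) x ⬝ᵥ y := by
    rw [dotProduct_omul_eq_omul_conjO_dotProduct, conjO_conjO]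
  have h_by : b ⬝ᵥ omul y (conjO x) = omul b x ⬝ᵥ y := by
    rw [dotProduct_omul_eq_omul_conjO_dotProduct, conjO_conjO]
  rw [normSq_add_sub_two_smul, normSq_add_sub_two_smul]
  simp only [normSq_smul, smul_dotProduct, dotProduct_smul, smul_eq_mul, normSq_conjO,
    normSq_omul, h_a, h_b, h_ab, h_ay, h_by]
  ring

def hnorm4 (p : Octo × Octo) : ℝ := normSq p.1 ^ 2 + normSq p.2

def hgauge (p : Octo × Octo) : Octo := normSq p.1 • e 0 - p.2

lemma hnorm_eq_rpow (p : Octo × Octo) : hnorm p = hnorm4 p ^ ((1:ℝ) / 4) := rfl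

lemma hnorm4_nonneg (p : Octo × Octo) : 0 ≤ hnorm4 p :=
  add_nonneg (sq_nonneg _) (normSq_nonneg _)

lemma hnorm4_eq_zero_iff {p : Octo × Octo} : hnorm4 p = 0 ↔ p = 0 := by
  rw [hnorm4, add_eq_zero_iff_of_nonneg (sq_nonneg _) (normSq_nonneg _), sq_eq_zero_iff,
    normSq_eq_zero_iff, normSq_eq_zero_iff, Prod.ext_iff]
  rfl

lemma normSq_hgauge {p : Octo × Octo} (hp : p.2 0 = 0) : normSq (hgauge p) = hnorm4 p := by
  simp [hgauge, hnorm4, normSq, Fin.sum_univ_eight, e, hp]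
  ring

lemma conjO_hgauge {p : Octo × Octo} (hp : p.2 0 = 0) :
    conjO (hgauge p) = normSq p.1 • e 0 + p.2 := by
  funext d; fin_cases d <;> simp [hgauge, conjO, e, hp]

lemma hnorm4_hmul_hinv {p q : Octo × Octo} (hp : p.2 0 = 0) (hq : q.2 0 = 0) :
    hnorm4 (hmul (hinv p) q)
      = normSq (conjO (hgauge p) + hgauge q - (2:ℝ) • omul q.1 (conjO p.1)) := by
  simp [hnorm4, hmul, hinv, hgauge, normSq, Fin.sum_univ_eight, omul_eq, conjO, imO, e, hp, hq]
  ring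

lemma Rmap_snd (p : Octo × Octo) : (Rmap p).2 = -((hnorm4 p)⁻¹ • p.2) := rfl

lemma Rmap_fst {p : Octo × Octo} (hp : p.2 0 = 0) :
    (Rmap p).1 = -((hnorm4 p)⁻¹ • omul (conjO (hgauge p)) p.1) := by
  rw [Rmap, oinv, ← hgauge, normSq_hgauge hp, omul_smul_left]

lemma hgauge_Rmap {p : Octo × Octo} (hp : p.2 0 = 0) (h0 : hnorm4 p ≠ 0) :
    hgauge (Rmap p) = (hnorm4 p)⁻¹ • conjO (hgauge p) := by
  have h1 : normSq (Rmap p).1 = (hnorm4 p)⁻¹ * normSq p.1 := by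
    rw [Rmap_fst hp, normSq_neg, normSq_smul, normSq_omul, normSq_conjO, normSq_hgauge hp]
    field_simp
  rw [hgauge, h1, Rmap_snd, conjO_hgauge hp, sub_neg_eq_add, smul_add, smul_smul]

lemma hnorm4_hmul_hinv_Rmap {ξ η : Octo × Octo} (hξ : ξ ≠ 0) (hη : η ≠ 0)
    (hiξ : ξ.2 0 = 0) (hiη : η.2 0 = 0) :
    hnorm4 (hmul (hinv (Rmap ξ)) (Rmap η)) * hnorm4 ξ * hnorm4 η
      = hnorm4 (hmul (hinv ξ) η) := by
  have hξ0 : hnorm4 ξ ≠ 0 := hnorm4_eq_zero_iff.not.mpr hξ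
  have hη0 : hnorm4 η ≠ 0 := hnorm4_eq_zero_iff.not.mpr hη
  have hR (p : Octo × Octo) (hp : p.2 0 = 0) : (Rmap p).2 0 = 0 := by simp [Rmap_snd, hp]
  -- clearing the denominators turns the left side into that of `normSq_inversion_identity`
  have h_scaled : (hnorm4 ξ * hnorm4 η) • (conjO (hgauge (Rmap ξ)) + hgauge (Rmap η)
        - (2:ℝ) • omul (Rmap η).1 (conjO (Rmap ξ).1))
      = normSq (hgauge η) • hgauge ξ + normSq (hgauge ξ) • conjO (hgauge η)
        - (2:ℝ) • omul (omul (conjO (hgauge η)) η.1) (omul (conjO ξ.1) (hgauge ξ)) := by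
    rw [Rmap_fst hiξ, Rmap_fst hiη, hgauge_Rmap hiξ hξ0, hgauge_Rmap hiη hη0, conjO_smul,
      conjO_conjO, conjO_neg, conjO_smul, conjO_omul, conjO_conjO, omul_neg_left, omul_neg_right,
      neg_neg, omul_smul_left, omul_smul_right, normSq_hgauge hiξ, normSq_hgauge hiη]
    match_scalars <;> field_simp
  have h_sq : (hnorm4 ξ * hnorm4 η) ^ 2 * hnorm4 (hmul (hinv (Rmap ξ)) (Rmap η))
      = hnorm4 ξ * hnorm4 η * hnorm4 (hmul (hinv ξ) η) := by
    rw [hnorm4_hmul_hinv (hR ξ hiξ) (hR η hiη), ← normSq_smul, h_scaled, normSq_inversion_identity,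
      normSq_hgauge hiξ, normSq_hgauge hiη, hnorm4_hmul_hinv hiξ hiη]
  exact mul_left_cancel₀ (mul_ne_zero hξ0 hη0) (by linear_combination h_sq)

/-- distance distortion of the inversion:
‖R(ξ)⁻¹·R(η)‖ ‖ξ‖ ‖η‖ = ‖ξ⁻¹·η‖. -/
theorem Rmap_distance_distortion (ξ η : Octo × Octo)
    (hξ : ξ ≠ 0) (hη : η ≠ 0) (hiξ : ξ.2 0 = 0) (hiη : η.2 0 = 0) :
    hnorm (hmul (hinv (Rmap ξ)) (Rmap η)) * hnorm ξ * hnorm η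
      = hnorm (hmul (hinv ξ) η) := by
  simp only [hnorm_eq_rpow]
  rw [← Real.mul_rpow (hnorm4_nonneg _) (hnorm4_nonneg _),
    ← Real.mul_rpow (mul_nonneg (hnorm4_nonneg _) (hnorm4_nonneg _)) (hnorm4_nonneg _),
    hnorm4_hmul_hinv_Rmap hξ hη hiξ hiη]

end OC
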